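/- arXiv:1911.03542 — 2 statements merged into one kernel-verified Lean document; each statement's English description precedes it below -/
import Mathlib

section
/- Let p_1 > p_2 > ... > p_k be the elements of the PSS closure P_{i−1} in descending order, and let m be such that p_m = pss(i). Let ℓ_x = lce(p_x, i) be the length of the longest common prefix of suffixes S_{p_x} and S_i. Then ℓ_1 ≤ ℓ_2 ≤ ... ≤ ℓ_{m−1} and ℓ_m ≥ ℓ_{m+1} ≥ ... ≥ ℓ_k (the LCE values are bitonic with peak at m−1 or m). -/
variable {α : Type*} [LinearOrder α]

/-- A Lyndon word: nonempty and strictly smaller than all of its proper nonempty suffixes. -/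
def IsLyndon (s : List α) : Prop :=
  s ≠ [] ∧ ∀ i, 0 < i → i < s.length → List.Lex (· < ·) s (s.drop i)

/-- The `i`-th suffix of `S` (1-indexed); `sfx S 0 = []` plays the role of the sentinel
suffix `S₀ = $`, and `sfx S (n+1) = []` plays the role of `S_{n+1} = $`
(the empty list is lexicographically smaller than every nonempty list). -/
def sfx (S : List α) (i : ℕ) : List α := if i = 0 then [] else S.drop (i - 1)

open scoped Classical in
/-- `pss S j = max {k ∈ [0,j) : S_k ≺ S_j}`. -/
noncomputable def pss (S : List α) (j : ℕ) : ℕ :=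
  Nat.findGreatest (fun k => List.Lex (· < ·) (sfx S k) (sfx S j)) (j - 1)

/-- `nss S i = min {j ∈ (i, n+1] : S_j ≺ S_i}`. -/
noncomputable def nss (S : List α) (i : ℕ) : ℕ :=
  sInf {j | i < j ∧ j ≤ S.length + 1 ∧ List.Lex (· < ·) (sfx S j) (sfx S i)}

/-- Length of the longest common prefix of two lists. -/
def lcp : List α → List α → ℕ
  | a :: s, b :: t => if a = b then lcp s t + 1 else 0
  | _, _ => 0

/-- The PSS closure: all iterates of `pss` starting from `j`. -/
noncomputable def pssClosure (S : List α) (j : ℕ) : Set ℕ :=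
  {k | ∃ m, (pss S)^[m] j = k}

open scoped Classical in
/-- Size of the subtree of node `i` in the PSS tree of `S`. -/
noncomputable def subtreeSize (S : List α) (i : ℕ) : ℕ :=
  ((Finset.range (S.length + 1)).filter
    (fun j => j = i ∨ ∃ m, 0 < m ∧ (pss S)^[m] j = i)).card

open scoped Classical in
/-- `lam S i`: length of the longest Lyndon word starting at position `i` (1-indexed). -/
noncomputable def lam (S : List α) (i : ℕ) : ℕ :=
  Nat.findGreatest (fun ℓ => IsLyndon ((S.drop (i - 1)).take ℓ)) (S.length + 1 - i)

/-!
Iterating `pss` strictly decreases the suffix, so `P_{i-1}`, listed by decreasing position, is a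
strictly decreasing chain of suffixes. By maximality of `pss i`, every closure element above
`pss i` (and below `i`) has a suffix larger than `S_i`, while `S_{pss i}` is smaller, so `S_i`
sits in the chain right before `p_m`. For lexicographically ordered `A < B < C` one has
`lcp A C ≤ lcp A B` and `lcp A C ≤ lcp B C`; on either side of `S_i` this makes `lcp` with `S_i`
grow towards it.
-/

theorem lcp_comm (A B : List α) : lcp A B = lcp B A := by
  induction A generalizing B with
  | nil => cases B <;> rfl
  | cons a s ih =>
    cases B with
    | nil => rfl
    | cons b t => simp only [lcp, ih, eq_comm (a := a)]

theorem lcp_le_lcp_of_lt_of_lt {A B C : List α} (hAB : A < B) (hBC : B < C) :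
    lcp A C ≤ lcp A B ∧ lcp A C ≤ lcp B C := by
  induction A generalizing B C with
  | nil => simp [lcp]
  | cons a s ih =>
    obtain _ | ⟨b, u⟩ := B
    · cases hAB
    obtain _ | ⟨c, t⟩ := C
    · cases hBC
    by_cases hac : a = c
    · subst hac
      -- `a ≤ b ≤ a` forces all three heads to agree
      obtain rfl : b = a := le_antisymm (List.head_le_of_lt hBC) (List.head_le_of_lt hAB)
      have hsu : s < u := (List.cons_lt_cons_iff.mp hAB).resolve_left (lt_irrefl b) |>.2
      have hut : u < t := (List.cons_lt_cons_iff.mp hBC).resolve_left (lt_irrefl b) |>.2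
      simpa [lcp] using ih hsu hut
    · simp [lcp, hac]

theorem lcp_le_lcp_of_lt_of_le {B D E : List α} (hBD : B < D) (hDE : D ≤ E) :
    lcp B E ≤ lcp B D := by
  obtain hDE | rfl := hDE.lt_or_eq
  · exact (lcp_le_lcp_of_lt_of_lt hBD hDE).1
  · exact le_rfl

theorem lcp_le_lcp_of_le_of_lt {B D E : List α} (hED : E ≤ D) (hDB : D < B) :
    lcp E B ≤ lcp D B := by
  obtain hED | rfl := hED.lt_or_eq
  · exact (lcp_le_lcp_of_lt_of_lt hED hDB).2
  · exact le_rfl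

theorem length_sfx {β : Type*} (S : List β) {j : ℕ} (hj : j ≠ 0) :
    (sfx S j).length = S.length - (j - 1) := by
  simp [sfx, hj]

theorem sfx_zero_lt (S : List α) {j : ℕ} (hj1 : 1 ≤ j) (hj2 : j ≤ S.length) :
    sfx S 0 < sfx S j := by
  cases hs : sfx S j with
  | nil =>
    have := length_sfx S (j := j) (by omega)
    simp only [hs, List.length_nil] at this
    omega
  | cons a l => exact List.nil_lt_cons a l

theorem sfx_ne_of_lt {β : Type*} (S : List β) {a b : ℕ} (ha : 1 ≤ a) (hab : a < b)
    (hb : b ≤ S.length + 1) :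
    sfx S a ≠ sfx S b := by
  intro h
  have := congrArg List.length h
  rw [length_sfx S (by omega), length_sfx S (by omega)] at this
  omega

theorem pss_le_sub_one (S : List α) (j : ℕ) : pss S j ≤ j - 1 :=
  Nat.findGreatest_le _

theorem pss_zero (S : List α) : pss S 0 = 0 :=
  Nat.le_zero.mp (pss_le_sub_one S 0)

theorem sfx_pss_lt {S : List α} {j : ℕ} (hj1 : 1 ≤ j) (hj2 : j ≤ S.length) :
    sfx S (pss S j) < sfx S j := by
  unfold pss
  exact Nat.findGreatest_spec (P := fun k => List.Lex (· < ·) (sfx S k) (sfx S j))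
    (Nat.zero_le _) (sfx_zero_lt S hj1 hj2)

theorem sfx_lt_sfx_of_pss_lt {S : List α} {j k : ℕ} (hk : pss S j < k) (hkj : k < j)
    (hj : j ≤ S.length + 1) : sfx S j < sfx S k := by
  have hnot : ¬ sfx S k < sfx S j := by
    unfold pss at hk
    exact Nat.findGreatest_is_greatest
      (P := fun k => List.Lex (· < ·) (sfx S k) (sfx S j)) (n := j - 1) hk (by omega)
  exact lt_of_le_of_ne (not_lt.mp hnot) (sfx_ne_of_lt S (by omega) hkj (by omega)).symm

theorem iterate_pss_antitone (S : List α) (j : ℕ) : Antitone fun d => (pss S)^[d] j :=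
  antitone_nat_of_succ_le fun d => by
    rw [Function.iterate_succ_apply']
    exact (pss_le_sub_one S _).trans (Nat.sub_le _ 1)

theorem sfx_iterate_pss_lt {S : List α} {j : ℕ} (hj1 : 1 ≤ j) (hj2 : j ≤ S.length) (d : ℕ) :
    sfx S ((pss S)^[d + 1] j) < sfx S j := by
  induction d with
  | zero => simpa using sfx_pss_lt hj1 hj2
  | succ d ih =>
    rw [Function.iterate_succ_apply']
    set q := (pss S)^[d + 1] j
    rcases Nat.eq_zero_or_pos q with hq | hq
    · rw [hq, pss_zero]
      exact sfx_zero_lt S hj1 hj2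
    · have hqj : q ≤ j := iterate_pss_antitone S j (Nat.zero_le _)
      exact (sfx_pss_lt hq (hqj.trans hj2)).trans ih

theorem le_of_mem_pssClosure {S : List α} {j a : ℕ} (ha : a ∈ pssClosure S j) : a ≤ j := by
  obtain ⟨d, rfl⟩ := ha
  exact iterate_pss_antitone S j (Nat.zero_le d)

theorem sfx_lt_sfx_of_mem_pssClosure {S : List α} {j a b : ℕ} (hj : j ≤ S.length)
    (ha : a ∈ pssClosure S j) (hb : b ∈ pssClosure S j) (hba : b < a) :
    sfx S b < sfx S a := by
  obtain ⟨s, rfl⟩ := ha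
  obtain ⟨t, rfl⟩ := hb
  have hst : s < t := lt_of_not_ge fun hts => hba.not_ge (iterate_pss_antitone S j hts)
  obtain ⟨d, rfl⟩ := Nat.exists_eq_add_of_lt hst
  rw [show s + d + 1 = d + 1 + s by omega, Function.iterate_add_apply]
  exact sfx_iterate_pss_lt (by omega) ((le_of_mem_pssClosure ⟨s, rfl⟩).trans hj) d

/-- bitonicity of the LCE values along the PSS closure.
`p 0 > p 1 > ⋯ > p (k-1)` enumerates `P_{i−1}` in descending order, `p m = pss i`;
then `ℓ` is nondecreasing before `m` and nonincreasing from `m` on, where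
`ℓ x = lce (p x) i = lcp S_{p x} S_i`. -/
theorem stmt5 (S : List α) (i : ℕ) (h1 : 1 ≤ i) (h2 : i ≤ S.length)
    (k : ℕ) (p : Fin k → ℕ) (hanti : StrictAnti p)
    (hrange : Set.range p = pssClosure S (i - 1))
    (m : Fin k) (hm : p m = pss S i) :
    (∀ x y : Fin k, x ≤ y → (y : ℕ) < (m : ℕ) →
        lcp (sfx S (p x)) (sfx S i) ≤ lcp (sfx S (p y)) (sfx S i)) ∧
    (∀ x y : Fin k, m ≤ x → x ≤ y →
        lcp (sfx S (p y)) (sfx S i) ≤ lcp (sfx S (p x)) (sfx S i)) := by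
  have hmem (x : Fin k) : p x ∈ pssClosure S (i - 1) := hrange ▸ Set.mem_range_self x
  have hchain : StrictAnti fun x => sfx S (p x) := fun x y hxy =>
    sfx_lt_sfx_of_mem_pssClosure (j := i - 1) (by omega) (hmem x) (hmem y) (hanti hxy)
  have hbefore (y : Fin k) (hy : y < m) : sfx S i < sfx S (p y) :=
    have hyi := le_of_mem_pssClosure (hmem y)
    sfx_lt_sfx_of_pss_lt (hm ▸ hanti hy) (by omega) (by omega)
  have hpeak : sfx S (p m) < sfx S i := hm ▸ sfx_pss_lt h1 h2
  refine ⟨fun x y hxy hym => ?_, fun x y hmx hxy => ?_⟩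
  · rw [lcp_comm (sfx S (p x)), lcp_comm (sfx S (p y))]
    exact lcp_le_lcp_of_lt_of_le (hbefore y hym) (hchain.antitone hxy)
  · exact lcp_le_lcp_of_le_of_lt (hchain.antitone hxy) ((hchain.antitone hmx).trans_lt hpeak)
end

section
/- In an increasing Lyndon run, consecutive repetition starts are linked by pss: with μ = S[r_1..r_2) a Lyndon word, r_2 = r_1+|μ|, r_3 = r_2+|μ|, S[r_1..r_3) = μμ, and S_{r_1} ≺ S_{r_2}, it holds that pss(r_2) = r_1. -/
/-! A suffix starting strictly inside the first copy of `μ` reads `μ[i..] ++ μ ++ w`, while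
`S_{r₂} = μ ++ w`. The Lyndon comparison `μ ≺ μ[i..]` cannot be decided by `μ` running out, as
`μ[i..]` is the shorter word, so it survives appending anything: `S_{r₂}` is smaller. Hence no
start in `(r₁, r₂)` precedes `S_{r₂}`, and `r₁` does by assumption. -/

variable {α : Type*} [LinearOrder α]

theorem List.Lex.append_of_length_le {β : Type*} {r : β → β → Prop} {s t : List β}
    (h : List.Lex r s t) (hl : t.length ≤ s.length) (u v : List β) :
    List.Lex r (s ++ u) (t ++ v) := by
  induction h with
  | nil => simp at hl
  | rel h => exact List.Lex.rel h
  | cons _ ih => exact List.Lex.cons (ih (Nat.le_of_succ_le_succ hl))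

theorem IsLyndon.lex_append_drop_append {μ : List α} (hμ : IsLyndon μ) {i : ℕ} (hi₀ : 0 < i)
    (hi : i < μ.length) (u v : List α) :
    List.Lex (· < ·) (μ ++ u) (μ.drop i ++ v) :=
  (hμ.2 i hi₀ hi).append_of_length_le (by simp) u v

theorem sfx_add_of_drop_eq_append {β : Type*} {S u v : List β} {r : ℕ} (hr : 1 ≤ r)
    (hS : S.drop (r - 1) = u ++ v) {i : ℕ} (hi : i ≤ u.length) :
    sfx S (r + i) = u.drop i ++ v := by
  rw [sfx, if_neg (by omega), show r + i - 1 = r - 1 + i by omega, ← List.drop_drop, hS,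
    List.drop_append_of_le_length hi]

theorem pss_eq_of_lex {S : List α} {j k : ℕ} (hkj : k < j)
    (hk : List.Lex (· < ·) (sfx S k) (sfx S j))
    (hmax : ∀ n, k < n → n < j → ¬ List.Lex (· < ·) (sfx S n) (sfx S j)) :
    pss S j = k := by
  rw [pss, Nat.findGreatest_eq_iff]
  exact ⟨by omega, fun _ => hk, fun n hkn hnj => hmax n hkn (by omega)⟩

theorem stmt14_general (S μ : List α) (hμ : IsLyndon μ) (r₁ r₂ : ℕ) (h1 : 1 ≤ r₁)
    (hr2 : r₂ = r₁ + μ.length)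
    (hocc : (S.drop (r₁ - 1)).take (2 * μ.length) = μ ++ μ)
    (hinc : List.Lex (· < ·) (sfx S r₁) (sfx S r₂)) :
    pss S r₂ = r₁ := by
  set w := μ ++ S.drop (r₁ - 1 + 2 * μ.length)
  have hS : S.drop (r₁ - 1) = μ ++ w := by
    rw [← List.take_append_drop (2 * μ.length) (S.drop (r₁ - 1)), hocc, List.drop_drop,
      List.append_assoc]
  have hr₂ : sfx S r₂ = w := by
    rw [hr2, sfx_add_of_drop_eq_append h1 hS le_rfl, List.drop_length, List.nil_append]
  refine pss_eq_of_lex (by simp [hr2, List.length_pos_iff.mpr hμ.1]) hinc fun n hn hn₂ hlex => ?_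
  obtain ⟨i, rfl⟩ := Nat.exists_eq_add_of_lt hn
  have hsmaller : List.Lex (· < ·) (sfx S r₂) (sfx S (r₁ + (i + 1))) := by
    rw [hr₂, sfx_add_of_drop_eq_append h1 hS (by omega)]
    exact hμ.lex_append_drop_append (by omega) (by omega) _ _
  exact asymm hsmaller hlex

/-- in an increasing Lyndon run (`S[r₁..r₃) = μμ`, `S_{r₁} ≺ S_{r₂}`),
consecutive repetition starts are linked by pss: `pss r₂ = r₁`. -/
theorem stmt14 (S μ : List α) (hμ : IsLyndon μ) (r₁ r₂ r₃ : ℕ) (h1 : 1 ≤ r₁)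
    (hr2 : r₂ = r₁ + μ.length) (hr3 : r₃ = r₂ + μ.length)
    (hfit : r₁ - 1 + 2 * μ.length ≤ S.length)
    (hocc : (S.drop (r₁ - 1)).take (2 * μ.length) = μ ++ μ)
    (hinc : List.Lex (· < ·) (sfx S r₁) (sfx S r₂)) :
    pss S r₂ = r₁ :=
  stmt14_general S μ hμ r₁ r₂ h1 hr2 hocc hinc
end
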